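/- Let D be a tournament missing disjoint paths of length 2 and let C = a_1b_1c_1, …, a_kb_kc_k be a double cycle in Δ(D). For each i ∈ {1,…,k} let (x_i, y_i) be an ordered pair with {x_i,y_i} = {a_i,b_i} or {x_i,y_i} = {b_i,c_i}. Then for every j ∈ {1,…,k} and every i ∈ {1,…,k} with i ≠ j: (1) x_j→x_i if and only if y_i→x_j; (2) x_j→y_i if and only if x_i→x_j; (3) y_j→x_i if and only if y_i→y_j; (4) y_j→y_i if and only if x_i→y_j. -/

import Mathlib

namespace SSNC

variable {V : Type*}

/-- The arc relation of an oriented graph: no digons (hence irreflexive). -/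
def Oriented (A : V → V → Prop) : Prop := ∀ u v, A u v → ¬ A v u

/-- `u ∈ N⁺⁺(v)`: the second out-neighborhood. -/
def SecondOut (A : V → V → Prop) (v u : V) : Prop :=
  u ≠ v ∧ ¬ A v u ∧ ∃ w, A v w ∧ A w u

/-- `{u, v}` is a missing edge of the digraph. -/
def IsMissing (A : V → V → Prop) (u v : V) : Prop :=
  u ≠ v ∧ ¬ A u v ∧ ¬ A v u

/-- The losing relation for a fixed labeling of the two pairs: `a→x`, `b→y`,
`y ∉ N⁺(a) ∪ N⁺⁺(a)` and `x ∉ N⁺(b) ∪ N⁺⁺(b)`. -/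
def LosesOrd (A : V → V → Prop) (a b x y : V) : Prop :=
  A a x ∧ A b y ∧ ¬ A a y ∧ ¬ SecondOut A a y ∧ ¬ A b x ∧ ¬ SecondOut A b x

/-- The missing edge `{a,b}` loses to the missing edge `{x,y}` (for some labeling). -/
def Loses (A : V → V → Prop) (a b x y : V) : Prop :=
  LosesOrd A a b x y ∨ LosesOrd A a b y x

/-- Degree of a vertex in the missing graph. -/
noncomputable def mdeg (A : V → V → Prop) (v : V) : ℕ :=
  ({w | IsMissing A v w} : Set V).ncard

/-- The missing graph, as a simple graph. -/
def missingGraph (A : V → V → Prop) : SimpleGraph V where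
  Adj u v := IsMissing A u v
  symm := by
    constructor
    rintro u v ⟨h1, h2, h3⟩
    exact ⟨h1.symm, h3, h2⟩
  loopless := by
    constructor
    rintro v ⟨h1, -, -⟩
    exact h1 rfl

/-- The missing graph is a vertex-disjoint union of paths
(equivalently: acyclic with maximum degree at most 2). -/
def MissingDisjointPaths (A : V → V → Prop) : Prop :=
  (missingGraph A).IsAcyclic ∧ ∀ v, mdeg A v ≤ 2

/-- The missing graph is a vertex-disjoint union of paths on exactly 3 vertices
(equivalently: every missing edge has one endpoint of missing-degree 1 and one of
missing-degree 2). -/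
def MissingPaths2 (A : V → V → Prop) : Prop :=
  ∀ u v, IsMissing A u v →
    (mdeg A u = 1 ∧ mdeg A v = 2) ∨ (mdeg A u = 2 ∧ mdeg A v = 1)

/-- The missing graph is a vertex-disjoint union of paths on 2 or 3 vertices. -/
def MissingPathsLe2 (A : V → V → Prop) : Prop :=
  ∀ u v, IsMissing A u v →
    (mdeg A u = 1 ∧ mdeg A v = 1) ∨ (mdeg A u = 1 ∧ mdeg A v = 2) ∨
    (mdeg A u = 2 ∧ mdeg A v = 1)

/-- Out-degree of the missing edge `{u,v}` in the dependency digraph `Δ(D)`: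
the number of missing edges it loses to. -/
noncomputable def outDegDelta (A : V → V → Prop) (u v : V) : ℕ :=
  ({f : Sym2 V | ∃ x y, f = s(x, y) ∧ IsMissing A x y ∧ Loses A u v x y}).ncard

/-- In-degree of the missing edge `{u,v}` in the dependency digraph `Δ(D)`:
the number of missing edges losing to it. -/
noncomputable def inDegDelta (A : V → V → Prop) (u v : V) : ℕ :=
  ({f : Sym2 V | ∃ x y, f = s(x, y) ∧ IsMissing A x y ∧ Loses A x y u v}).ncard

/-- `C = a₁b₁c₁, …, a_k b_k c_k` is a double cycle in `Δ(D)`: pairwise vertex-disjoint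
missing paths of length 2 (`k ≥ 2`), where each of `{aᵢ,bᵢ}, {bᵢ,cᵢ}` loses to each of
`{aᵢ₊₁,bᵢ₊₁}, {bᵢ₊₁,cᵢ₊₁}` (indices modulo `k`). -/
def IsDoubleCycle (A : V → V → Prop) (k : ℕ) (a b c : ZMod k → V) : Prop :=
  2 ≤ k ∧
  (∀ i, IsMissing A (a i) (b i) ∧ IsMissing A (b i) (c i) ∧ a i ≠ c i) ∧
  (∀ i j, i ≠ j → Disjoint ({a i, b i, c i} : Set V) {a j, b j, c j}) ∧
  (∀ i, Loses A (a i) (b i) (a (i + 1)) (b (i + 1)) ∧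
        Loses A (a i) (b i) (b (i + 1)) (c (i + 1)) ∧
        Loses A (b i) (c i) (a (i + 1)) (b (i + 1)) ∧
        Loses A (b i) (c i) (b (i + 1)) (c (i + 1)))

/-- `K(C)` for a double cycle `C`. -/
def Kset {k : ℕ} (a b c : ZMod k → V) : Set V :=
  {v | ∃ i, v = a i ∨ v = b i ∨ v = c i}

/-- Out-neighborhood in the subdigraph induced on `K`. -/
def outIn (A : V → V → Prop) (K : Set V) (v : V) : Set V := {u | u ∈ K ∧ A v u}

/-- In-neighborhood in the subdigraph induced on `K`. -/
def inIn (A : V → V → Prop) (K : Set V) (v : V) : Set V := {u | u ∈ K ∧ A u v}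

/-- Second out-neighborhood in the subdigraph induced on `K`. -/
def secondOutIn (A : V → V → Prop) (K : Set V) (v : V) : Set V :=
  {u | u ∈ K ∧ u ≠ v ∧ ¬ A v u ∧ ∃ w ∈ K, A v w ∧ A w u}

/-- Second in-neighborhood in the subdigraph induced on `K`. -/
def secondInIn (A : V → V → Prop) (K : Set V) (v : V) : Set V :=
  {u | u ∈ K ∧ u ≠ v ∧ ¬ A u v ∧ ∃ w ∈ K, A u w ∧ A w v}

/-!
Vertices of distinct missing paths of a double cycle are joined by an arc, and the chosen missing
edges `{xᵢ, yᵢ}` again form a cycle in which each loses to the next. Suppose a vertex `v` of pair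
`j` dominates both vertices of pair `i + 1`, where `i ≠ j`. An arc from pair `i` to `v` followed by
the arc from `v` into pair `i + 1` would put a vertex of pair `i + 1` into a forbidden second
out-neighbourhood, so `v` dominates pair `i` as well. Walking backwards around the cycle reaches
pair `j + 1`, which `v` cannot dominate because `{xⱼ, yⱼ}` loses to it. Reversing all arcs reverses
the losing relation, so dually no vertex of pair `j` is dominated by both vertices of another pair;
since `v` is joined to both vertices of pair `i`, the four equivalences follow.
-/

section Loses

variable {A : V → V → Prop} {a b x y v : V}

theorem IsMissing.symm (h : IsMissing A a b) : IsMissing A b a :=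
  ⟨h.1.symm, h.2.2, h.2.1⟩

theorem Oriented.swap (hA : Oriented A) : Oriented (Function.swap A) :=
  fun u w h => hA w u h

theorem Loses.swap_left (h : Loses A a b x y) : Loses A b a x y := by
  rcases h with ⟨h₁, h₂, h₃, h₄, h₅, h₆⟩ | ⟨h₁, h₂, h₃, h₄, h₅, h₆⟩
  · exact Or.inr ⟨h₂, h₁, h₅, h₆, h₃, h₄⟩
  · exact Or.inl ⟨h₂, h₁, h₅, h₆, h₃, h₄⟩

theorem Loses.swap_right (h : Loses A a b x y) : Loses A a b y x :=
  h.symm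

theorem Loses.of_pair_eq {a' b' x' y' : V} (h : Loses A a b x y)
    (hab : ({a', b'} : Set V) = {a, b}) (hxy : ({x', y'} : Set V) = {x, y}) :
    Loses A a' b' x' y' := by
  rcases Set.pair_eq_pair_iff.mp hab with ⟨rfl, rfl⟩ | ⟨rfl, rfl⟩ <;>
    rcases Set.pair_eq_pair_iff.mp hxy with ⟨rfl, rfl⟩ | ⟨rfl, rfl⟩
  exacts [h, h.swap_right, h.swap_left, h.swap_left.swap_right]

theorem LosesOrd.swap (h : LosesOrd A a b x y) : LosesOrd (Function.swap A) x y a b :=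
  let ⟨h₁, h₂, h₃, h₄, h₅, h₆⟩ := h
  ⟨h₁, h₂, h₅, fun ⟨hne, hn, w, hw₁, hw₂⟩ => h₆ ⟨hne.symm, hn, w, hw₂, hw₁⟩,
    h₃, fun ⟨hne, hn, w, hw₁, hw₂⟩ => h₄ ⟨hne.symm, hn, w, hw₂, hw₁⟩⟩

theorem Loses.swap (h : Loses A a b x y) : Loses (Function.swap A) x y a b := by
  rcases h with h | h
  · exact Or.inl h.swap
  · exact Loses.swap_left (Or.inl h.swap)

theorem Loses.not_dominates_left (h : Loses A a b x y) : ¬ (A a x ∧ A a y) := by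
  rintro ⟨hx, hy⟩
  rcases h with ⟨-, -, h, -⟩ | ⟨-, -, h, -⟩
  exacts [h hy, h hx]

theorem Loses.not_dominates_right (h : Loses A a b x y) : ¬ (A b x ∧ A b y) :=
  h.swap_left.not_dominates_left

/-- An arc `a → v` together with `v → y` would put `y` into `N⁺⁺(a)`. -/
theorem LosesOrd.dominates_of_dominates (hA : Oriented A) (h : LosesOrd A a b x y)
    (hva : A v a ∨ A a v) (hvb : A v b ∨ A b v) (hx : A v x) (hy : A v y) :
    A v a ∧ A v b := by
  obtain ⟨-, -, hay, hay₂, hbx, hbx₂⟩ := h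
  refine ⟨hva.resolve_right fun hav => hay₂ ⟨?_, hay, v, hav, hy⟩,
    hvb.resolve_right fun hbv => hbx₂ ⟨?_, hbx, v, hbv, hx⟩⟩
  · rintro rfl
    exact hA _ _ hav hy
  · rintro rfl
    exact hA _ _ hbv hx

theorem Loses.dominates_of_dominates (hA : Oriented A) (h : Loses A a b x y)
    (hva : A v a ∨ A a v) (hvb : A v b ∨ A b v) (hx : A v x) (hy : A v y) :
    A v a ∧ A v b := by
  rcases h with h | h
  exacts [h.dominates_of_dominates hA hva hvb hx hy, h.dominates_of_dominates hA hva hvb hy hx]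

end Loses

theorem ZMod.holds_of_succ_imp {k : ℕ} [NeZero k] {p : ZMod k → Prop}
    (h : ∀ i, p (i + 1) → p i) {i : ZMod k} (hi : p i) (j : ZMod k) : p j := by
  have key : ∀ n : ℕ, ∀ i, p (i + n) → p i := by
    intro n
    induction n with
    | zero => simp
    | succ n ih =>
      intro i hi
      exact h i (ih (i + 1) (by rwa [Nat.cast_succ, ← add_assoc, add_right_comm] at hi))
  exact key (i - j).val j (by rwa [ZMod.natCast_zmod_val, add_sub_cancel])

section LosingCycle

variable {A : V → V → Prop} {k : ℕ} [NeZero k] {x y : ZMod k → V}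

theorem not_dominates_of_loses_cycle (hA : Oriented A)
    (hloss : ∀ i, Loses A (x i) (y i) (x (i + 1)) (y (i + 1)))
    (hcomp : ∀ i j, i ≠ j → ∀ u ∈ ({x i, y i} : Set V), ∀ w ∈ ({x j, y j} : Set V),
      A u w ∨ A w u)
    {i j : ZMod k} (hij : i ≠ j) : ∀ v ∈ ({x j, y j} : Set V), ¬ (A v (x i) ∧ A v (y i)) := by
  intro v hv hvi
  have step : ∀ l, (l + 1 ≠ j ∧ A v (x (l + 1)) ∧ A v (y (l + 1))) →
      l ≠ j ∧ A v (x l) ∧ A v (y l) := by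
    rintro l ⟨-, hvl⟩
    by_cases hlj : l = j
    · subst hlj
      rcases hv with rfl | rfl
      exacts [absurd hvl (hloss l).not_dominates_left, absurd hvl (hloss l).not_dominates_right]
    · exact ⟨hlj, (hloss l).dominates_of_dominates hA
        (hcomp j l (Ne.symm hlj) v hv _ (by simp)) (hcomp j l (Ne.symm hlj) v hv _ (by simp))
        hvl.1 hvl.2⟩
  exact (ZMod.holds_of_succ_imp (p := fun l => l ≠ j ∧ A v (x l) ∧ A v (y l)) step
    ⟨hij, hvi⟩ j).1 rfl

theorem not_dominated_of_loses_cycle (hA : Oriented A)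
    (hloss : ∀ i, Loses A (x i) (y i) (x (i + 1)) (y (i + 1)))
    (hcomp : ∀ i j, i ≠ j → ∀ u ∈ ({x i, y i} : Set V), ∀ w ∈ ({x j, y j} : Set V),
      A u w ∨ A w u)
    {i j : ZMod k} (hij : i ≠ j) : ∀ v ∈ ({x j, y j} : Set V), ¬ (A (x i) v ∧ A (y i) v) := by
  intro v hv
  have hloss' : ∀ i, Loses (Function.swap A) (x (-i)) (y (-i)) (x (-(i + 1))) (y (-(i + 1))) := by
    intro i
    have := (hloss (-i - 1)).swap
    rwa [sub_add_cancel, ← neg_add'] at this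
  simpa [Function.swap] using not_dominates_of_loses_cycle (x := x ∘ Neg.neg) (y := y ∘ Neg.neg)
    hA.swap hloss' (fun i j hij u hu w hw => hcomp (-j) (-i) (neg_injective.ne hij.symm) w hw u hu)
    (neg_injective.ne hij) v (by simpa using hv)

end LosingCycle

section DoubleCycle

variable {A : V → V → Prop}

theorem MissingPaths2.mem_of_isMissing (hP : MissingPaths2 A) {a b c u w : V}
    (hab : IsMissing A a b) (hbc : IsMissing A b c) (hac : a ≠ c)
    (hu : u ∈ ({a, b, c} : Set V)) (huw : IsMissing A u w) : w ∈ ({a, b, c} : Set V) := by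
  have nbhd_eq : ∀ {z} {s : Set V}, s ⊆ {w | IsMissing A z w} → mdeg A z ≠ 0 →
      mdeg A z ≤ s.ncard → {w | IsMissing A z w} = s :=
    fun hs hz hle => (Set.eq_of_subset_of_ncard_le hs hle (Set.finite_of_ncard_ne_zero hz)).symm
  have hac_sub : ({a, c} : Set V) ⊆ {w | IsMissing A b w} := by
    simp [Set.insert_subset_iff, hab.symm, hbc]
  have hb_pos : mdeg A b ≠ 0 := by
    rcases hP a b hab with h | h <;> omega
  have hb_ge : 2 ≤ mdeg A b :=
    Set.ncard_pair hac ▸ Set.ncard_le_ncard hac_sub (Set.finite_of_ncard_ne_zero hb_pos)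
  obtain ⟨ha, hb⟩ : mdeg A a = 1 ∧ mdeg A b = 2 := by
    rcases hP a b hab with h | h <;> omega
  have hc : mdeg A c = 1 := by
    rcases hP b c hbc with h | h <;> omega
  have nb : {w | IsMissing A b w} = {a, c} :=
    nbhd_eq hac_sub (by omega) (by rw [Set.ncard_pair hac, hb])
  have na : {w | IsMissing A a w} = {b} :=
    nbhd_eq (by simpa using hab) (by omega) (by simp [ha])
  have nc : {w | IsMissing A c w} = {b} :=
    nbhd_eq (by simpa using hbc.symm) (by omega) (by simp [hc])
  have hsub : {w | IsMissing A u w} ⊆ {a, b, c} := by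
    rcases hu with rfl | rfl | rfl
    · simp [na]
    · simp [nb, Set.insert_subset_iff]
    · simp [nc]
  exact hsub huw

theorem IsDoubleCycle.comparable (hP : MissingPaths2 A) {k : ℕ} {a b c : ZMod k → V}
    (hC : IsDoubleCycle A k a b c) {i j : ZMod k} (hij : i ≠ j) {u w : V}
    (hu : u ∈ ({a i, b i, c i} : Set V)) (hw : w ∈ ({a j, b j, c j} : Set V)) :
    A u w ∨ A w u := by
  obtain ⟨-, hmiss, hdisj, -⟩ := hC
  by_contra h
  rw [not_or] at h
  have huw : u ≠ w := by
    rintro rfl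
    exact Set.disjoint_left.mp (hdisj i j hij) hu hw
  have hwi := hP.mem_of_isMissing (hmiss i).1 (hmiss i).2.1 (hmiss i).2.2 hu ⟨huw, h.1, h.2⟩
  exact Set.disjoint_left.mp (hdisj i j hij) hwi hw

theorem IsDoubleCycle.loses_succ {k : ℕ} {a b c x y : ZMod k → V}
    (hC : IsDoubleCycle A k a b c)
    (hsel : ∀ i, ({x i, y i} : Set V) = ({a i, b i} : Set V) ∨
                 ({x i, y i} : Set V) = ({b i, c i} : Set V)) (i : ZMod k) :
    Loses A (x i) (y i) (x (i + 1)) (y (i + 1)) := by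
  obtain ⟨L₁, L₂, L₃, L₄⟩ := hC.2.2.2 i
  rcases hsel i with h | h <;> rcases hsel (i + 1) with h' | h'
  exacts [L₁.of_pair_eq h h', L₂.of_pair_eq h h', L₃.of_pair_eq h h', L₄.of_pair_eq h h']

end DoubleCycle

theorem iff_of_not_dominates {A : V → V → Prop} {u p q : V}
    (hp : A u p ∨ A p u) (hq : A u q ∨ A q u)
    (hout : ¬ (A u p ∧ A u q)) (hin : ¬ (A p u ∧ A q u)) : A u p ↔ A q u :=
  ⟨fun h => hq.resolve_left fun h' => hout ⟨h, h'⟩,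
    fun h => hp.resolve_right fun h' => hin ⟨h', h⟩⟩

theorem stmt6_general {V : Type*} (A : V → V → Prop) (hA : Oriented A)
    (hP : MissingPaths2 A) (k : ℕ) (a b c : ZMod k → V)
    (hC : IsDoubleCycle A k a b c) (x y : ZMod k → V)
    (hsel : ∀ i, ({x i, y i} : Set V) = ({a i, b i} : Set V) ∨
                 ({x i, y i} : Set V) = ({b i, c i} : Set V)) :
    ∀ j i, i ≠ j →
      (A (x j) (x i) ↔ A (y i) (x j)) ∧
      (A (x j) (y i) ↔ A (x i) (x j)) ∧
      (A (y j) (x i) ↔ A (y i) (y j)) ∧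
      (A (y j) (y i) ↔ A (x i) (y j)) := by
  intro j i hij
  have : NeZero k := ⟨by have := hC.1; omega⟩
  have hsub : ∀ l, ({x l, y l} : Set V) ⊆ {a l, b l, c l} := by
    intro l
    rcases hsel l with h | h <;> simp [h, Set.insert_subset_iff]
  have hcomp : ∀ l m, l ≠ m → ∀ u ∈ ({x l, y l} : Set V), ∀ w ∈ ({x m, y m} : Set V),
      A u w ∨ A w u :=
    fun l m hlm u hu w hw => hC.comparable hP hlm (hsub l hu) (hsub m hw)
  have hout := not_dominates_of_loses_cycle hA (hC.loses_succ hsel) hcomp hij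
  have hin := not_dominated_of_loses_cycle hA (hC.loses_succ hsel) hcomp hij
  have key : ∀ v ∈ ({x j, y j} : Set V),
      (A v (x i) ↔ A (y i) v) ∧ (A v (y i) ↔ A (x i) v) := by
    intro v hv
    have hvx := hcomp j i (Ne.symm hij) v hv (x i) (by simp)
    have hvy := hcomp j i (Ne.symm hij) v hv (y i) (by simp)
    exact ⟨iff_of_not_dominates hvx hvy (hout v hv) (hin v hv),
      iff_of_not_dominates hvy hvx (fun h => hout v hv h.symm) (fun h => hin v hv h.symm)⟩
  obtain ⟨hx₁, hx₂⟩ := key (x j) (by simp)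
  obtain ⟨hy₁, hy₂⟩ := key (y j) (by simp)
  exact ⟨hx₁, hx₂, hy₁, hy₂⟩

/-- Corollary 4.7. -/
theorem stmt6 {V : Type*} [Fintype V] (A : V → V → Prop) (hA : Oriented A)
    (hP : MissingPaths2 A) (k : ℕ) (a b c : ZMod k → V)
    (hC : IsDoubleCycle A k a b c) (x y : ZMod k → V)
    (hsel : ∀ i, ({x i, y i} : Set V) = ({a i, b i} : Set V) ∨
                 ({x i, y i} : Set V) = ({b i, c i} : Set V)) :
    ∀ j i, i ≠ j →
      (A (x j) (x i) ↔ A (y i) (x j)) ∧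
      (A (x j) (y i) ↔ A (x i) (x j)) ∧
      (A (y j) (x i) ↔ A (y i) (y j)) ∧
      (A (y j) (y i) ↔ A (x i) (y j)) :=
  stmt6_general A hA hP k a b c hC x y hsel

end SSNC
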